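/- arXiv:0901.2508 — 2 statements merged into one kernel-verified Lean document; each statement's English description precedes it below -/
import Mathlib

section
/- Let n ≥ 2, let ξ be a unit vector in ℝ^{n+1}, and let c, C be real constants with c² < 1 and C² > 1 − c²; set S = √(C² + c² − 1) > 0. Define w⁺(x) = S + C⟨x,ξ⟩ and ω⁺ = {x ∈ S^n : w⁺(x) > 0}. Then the radial graph {x/w⁺(x) : x ∈ ω⁺} equals the sheet {p ∈ ℝ^{n+1} : ‖p − (2C/(1−c²))·ξ‖ − ‖p‖ = 2S/(1−c²)} of a two-sheeted hyperboloid of revolution with foci at the origin and at (2C/(1−c²))·ξ. -/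
/-!
On the unit sphere `w⁺(x) = S + C⟪x, ξ⟫` is the restriction of the positively `1`-homogeneous
function `f p = S‖p‖ + C⟪p, ξ⟫`, so the radial graph of `1 / w⁺` is the level set `f = 1`.
Squaring `‖p - a ξ‖ = ‖p‖ + k`, with `a = 2C/(1 - c²)` and `k = 2S/(1 - c²)`, gives
`a² - k² = 2(k‖p‖ + a⟪p, ξ⟫)`; since `a² - k² = 4/(1 - c²)`, this is again `f p = 1`.
-/

open scoped RealInnerProductSpace

open Metric

section RadialGraph

variable {E : Type*} [NormedAddCommGroup E] [InnerProductSpace ℝ E]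

def radialGraph (w : E → ℝ) : Set E :=
  {p | ∃ x ∈ sphere (0 : E) 1, 0 < w x ∧ p = (1 / w x) • x}

theorem radialGraph_congr {w w' : E → ℝ} (h : Set.EqOn w w' (sphere 0 1)) :
    radialGraph w = radialGraph w' := by
  ext p
  constructor <;> rintro ⟨x, hx, hw, rfl⟩
  · exact ⟨x, hx, h hx ▸ hw, by rw [h hx]⟩
  · exact ⟨x, hx, (h hx).symm ▸ hw, by rw [h hx]⟩

theorem radialGraph_eq_of_homogeneous {f : E → ℝ}
    (hf : ∀ r : ℝ, 0 < r → ∀ p, f (r • p) = r * f p) :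
    radialGraph f = {p | f p = 1} := by
  ext p
  constructor
  · rintro ⟨x, -, hx, rfl⟩
    show f _ = 1
    rw [hf _ (one_div_pos.mpr hx)]
    exact one_div_mul_cancel hx.ne'
  · intro hp
    have hp0 : p ≠ 0 := by
      rintro rfl
      have h0 := hf 2 two_pos 0
      rw [smul_zero, hp] at h0
      norm_num at h0
    have hr : 0 < ‖p‖ := norm_pos_iff.mpr hp0
    have hfx : f (‖p‖⁻¹ • p) = ‖p‖⁻¹ := by rw [hf _ (inv_pos.mpr hr), hp, mul_one]
    refine ⟨‖p‖⁻¹ • p, ?_, hfx.symm ▸ inv_pos.mpr hr, ?_⟩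
    · rw [mem_sphere_zero_iff_norm, norm_smul, norm_inv, norm_norm, inv_mul_cancel₀ hr.ne']
    · rw [hfx, one_div, inv_inv, smul_smul, mul_inv_cancel₀ hr.ne', one_smul]

end RadialGraph

theorem norm_sub_sub_norm_eq_iff {E : Type*} [NormedAddCommGroup E] [InnerProductSpace ℝ E]
    {k : ℝ} (hk : 0 ≤ k) (p v : E) :
    ‖p - v‖ - ‖p‖ = k ↔ ‖v‖ ^ 2 - k ^ 2 = 2 * (k * ‖p‖ + ⟪p, v⟫) := by
  rw [sub_eq_iff_eq_add, ← sq_eq_sq₀ (norm_nonneg _) (by positivity), norm_sub_sq_real]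
  constructor <;> intro h <;> linear_combination h

theorem hyperboloid_sheet_plus_general (n : ℕ)
    (ξ : EuclideanSpace ℝ (Fin (n + 1))) (hξ : ‖ξ‖ = 1)
    (c C : ℝ) (hc : c ^ 2 < 1) (hC : 1 - c ^ 2 < C ^ 2) :
    0 < Real.sqrt (C ^ 2 + c ^ 2 - 1) ∧
    {p : EuclideanSpace ℝ (Fin (n + 1)) |
        ∃ x ∈ Metric.sphere (0 : EuclideanSpace ℝ (Fin (n + 1))) 1,
          0 < Real.sqrt (C ^ 2 + c ^ 2 - 1) + C * ⟪x, ξ⟫ ∧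
          p = (1 / (Real.sqrt (C ^ 2 + c ^ 2 - 1) + C * ⟪x, ξ⟫)) • x} =
      {p : EuclideanSpace ℝ (Fin (n + 1)) |
        ‖p - (2 * C / (1 - c ^ 2)) • ξ‖ - ‖p‖ =
          2 * Real.sqrt (C ^ 2 + c ^ 2 - 1) / (1 - c ^ 2)} := by
  set S := Real.sqrt (C ^ 2 + c ^ 2 - 1)
  have hS : 0 < S := Real.sqrt_pos.mpr (by linarith)
  have hS2 : S ^ 2 = C ^ 2 + c ^ 2 - 1 := Real.sq_sqrt (by linarith)
  have hc1 : 0 < 1 - c ^ 2 := by linarith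
  refine ⟨hS, ?_⟩
  change radialGraph (fun x => S + C * ⟪x, ξ⟫) = _
  rw [radialGraph_congr (w' := fun p => S * ‖p‖ + C * ⟪p, ξ⟫)
      (fun x hx => by simp [mem_sphere_zero_iff_norm.mp hx]),
    radialGraph_eq_of_homogeneous (fun r hr p => by
      rw [norm_smul, Real.norm_of_nonneg hr.le, real_inner_smul_left]; ring)]
  ext p
  rw [Set.mem_ofPred_eq, Set.mem_ofPred_eq, norm_sub_sub_norm_eq_iff (by positivity),
    norm_smul, Real.norm_eq_abs, hξ, mul_one, sq_abs, real_inner_smul_right]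
  field_simp
  rw [show C ^ 2 - S ^ 2 = 1 * (1 - c ^ 2) by linarith, mul_left_inj' hc1.ne', eq_comm]

theorem hyperboloid_sheet_plus (n : ℕ) (hn : 2 ≤ n)
    (ξ : EuclideanSpace ℝ (Fin (n + 1))) (hξ : ‖ξ‖ = 1)
    (c C : ℝ) (hc : c ^ 2 < 1) (hC : 1 - c ^ 2 < C ^ 2) :
    0 < Real.sqrt (C ^ 2 + c ^ 2 - 1) ∧
    {p : EuclideanSpace ℝ (Fin (n + 1)) |
        ∃ x ∈ Metric.sphere (0 : EuclideanSpace ℝ (Fin (n + 1))) 1,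
          0 < Real.sqrt (C ^ 2 + c ^ 2 - 1) + C * ⟪x, ξ⟫ ∧
          p = (1 / (Real.sqrt (C ^ 2 + c ^ 2 - 1) + C * ⟪x, ξ⟫)) • x} =
      {p : EuclideanSpace ℝ (Fin (n + 1)) |
        ‖p - (2 * C / (1 - c ^ 2)) • ξ‖ - ‖p‖ =
          2 * Real.sqrt (C ^ 2 + c ^ 2 - 1) / (1 - c ^ 2)} :=
  hyperboloid_sheet_plus_general n ξ hξ c C hc hC
end

section
/- Let n ≥ 2, let ξ be a unit vector in ℝ^{n+1}, and let c, C be real constants with c² < 1 and C² > 1 − c²; set S = √(C² + c² − 1) > 0. Define w⁻(x) = −S + C⟨x,ξ⟩ and ω⁻ = {x ∈ S^n : w⁻(x) > 0}. Then the radial graph {x/w⁻(x) : x ∈ ω⁻} equals the sheet {p ∈ ℝ^{n+1} : ‖p‖ − ‖p − (2C/(1−c²))·ξ‖ = 2S/(1−c²)} of a two-sheeted hyperboloid of revolution with foci at the origin and at (2C/(1−c²))·ξ. -/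
/-!
Both sets are cut out by the same equation `C ⟪p, ξ⟫ = S ‖p‖ + 1`. For the radial graph this is
`C ⟪x, ξ⟫ = S + w⁻(x)` rescaled by `‖p‖ = 1 / w⁻(x)`. For the sheet, squaring
`‖p - a • ξ‖ = ‖p‖ - d` (with `a = 2C/(1-c²)`, `d = 2S/(1-c²)`) leaves a relation linear in
`⟪p, ξ⟫` and `‖p‖`, because `a² - d² = 4/(1-c²)`; and that relation already forces `‖p‖ ≥ d`,
so no solutions of the squared equation are spurious.
-/

open scoped RealInnerProductSpace

section Hyperboloid

variable {E : Type*} [NormedAddCommGroup E] [InnerProductSpace ℝ E]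

theorem radial_graph_eq_setOf_inner_eq (S C : ℝ) (ξ : E) :
    {p : E | ∃ x ∈ Metric.sphere (0 : E) 1,
        0 < -S + C * ⟪x, ξ⟫ ∧ p = (1 / (-S + C * ⟪x, ξ⟫)) • x} =
      {p : E | C * ⟪p, ξ⟫ = S * ‖p‖ + 1} := by
  ext p
  simp only [Set.mem_ofPred_eq]
  constructor
  · rintro ⟨x, hx, hw, rfl⟩
    rw [mem_sphere_zero_iff_norm] at hx
    rw [norm_smul, hx, Real.norm_eq_abs, abs_of_pos (one_div_pos.mpr hw), real_inner_smul_left]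
    field_simp
    ring
  · intro hp
    have hp0 : 0 < ‖p‖ := by
      refine norm_pos_iff.mpr fun h ↦ ?_
      simp [h] at hp
    have hw : -S + C * ⟪‖p‖⁻¹ • p, ξ⟫ = ‖p‖⁻¹ := by
      rw [real_inner_smul_left, mul_left_comm, hp]
      field_simp
      ring
    refine ⟨‖p‖⁻¹ • p, ?_, ?_, ?_⟩
    · rw [mem_sphere_zero_iff_norm, norm_smul, norm_inv, norm_norm, inv_mul_cancel₀ hp0.ne']
    · rw [hw]
      positivity
    · rw [hw, one_div, inv_inv, smul_smul, mul_inv_cancel₀ hp0.ne', one_smul]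

variable {ξ : E} {S C k : ℝ}

theorem norm_sub_smul_sq_eq_iff_inner_eq (hξ : ‖ξ‖ = 1) (hk : k ≠ 0) (hSC : S ^ 2 + k = C ^ 2)
    (p : E) :
    ‖p - (2 * C / k) • ξ‖ ^ 2 = (‖p‖ - 2 * S / k) ^ 2 ↔ C * ⟪p, ξ⟫ = S * ‖p‖ + 1 := by
  have hdiff : ‖p - (2 * C / k) • ξ‖ ^ 2 - (‖p‖ - 2 * S / k) ^ 2
      = 4 / k * (S * ‖p‖ + 1 - C * ⟪p, ξ⟫) := by
    rw [norm_sub_sq_real, real_inner_smul_right, norm_smul, hξ, mul_one, Real.norm_eq_abs,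
      sq_abs]
    field_simp
    linear_combination -4 * hSC
  have h4k : 4 / k ≠ 0 := div_ne_zero four_ne_zero hk
  rw [← sub_eq_zero, hdiff, mul_eq_zero, or_iff_right h4k, sub_eq_zero, eq_comm]

theorem div_le_norm_of_inner_eq (hξ : ‖ξ‖ = 1) (hk : 0 < k) (hSC : S ^ 2 + k = C ^ 2)
    {p : E} (hp : C * ⟪p, ξ⟫ = S * ‖p‖ + 1) : 2 * S / k ≤ ‖p‖ := by
  have hCp : C * ⟪p, ξ⟫ ≤ |C| * ‖p‖ := by
    calc C * ⟪p, ξ⟫ ≤ |C * ⟪p, ξ⟫| := le_abs_self _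
      _ = |C| * |⟪p, ξ⟫| := abs_mul _ _
      _ ≤ |C| * ‖p‖ := by
        gcongr
        simpa [hξ] using abs_real_inner_le_norm p ξ
  have hS : -|C| ≤ S ∧ S ≤ |C| :=
    abs_le_of_sq_le_sq' (by rw [sq_abs]; linarith) (abs_nonneg C)
  have hgap : 1 ≤ (|C| - S) * ‖p‖ := by linarith
  have hk_eq : k = (|C| + S) * (|C| - S) := by linear_combination hSC - sq_abs C
  rw [div_le_iff₀ hk, hk_eq]
  nlinarith [mul_le_mul_of_nonneg_left hgap (by linarith : 0 ≤ |C| + S)]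

theorem hyperboloid_sheet_eq_setOf_inner_eq (hξ : ‖ξ‖ = 1) (hk : 0 < k)
    (hSC : S ^ 2 + k = C ^ 2) :
    {p : E | ‖p‖ - ‖p - (2 * C / k) • ξ‖ = 2 * S / k} = {p : E | C * ⟪p, ξ⟫ = S * ‖p‖ + 1} := by
  ext p
  simp only [Set.mem_ofPred_eq]
  rw [← norm_sub_smul_sq_eq_iff_inner_eq hξ hk.ne' hSC]
  constructor
  · intro h
    rw [← h]
    ring
  · intro h
    have hd := div_le_norm_of_inner_eq hξ hk hSC
      ((norm_sub_smul_sq_eq_iff_inner_eq hξ hk.ne' hSC p).mp h)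
    have := (sq_eq_sq₀ (norm_nonneg _) (sub_nonneg.mpr hd)).mp h
    linarith

end Hyperboloid

theorem hyperboloid_sheet_minus_general (n : ℕ)
    (ξ : EuclideanSpace ℝ (Fin (n + 1))) (hξ : ‖ξ‖ = 1)
    (c C : ℝ) (hc : c ^ 2 < 1) (hC : 1 - c ^ 2 < C ^ 2) :
    0 < Real.sqrt (C ^ 2 + c ^ 2 - 1) ∧
    {p : EuclideanSpace ℝ (Fin (n + 1)) |
        ∃ x ∈ Metric.sphere (0 : EuclideanSpace ℝ (Fin (n + 1))) 1,
          0 < -Real.sqrt (C ^ 2 + c ^ 2 - 1) + C * ⟪x, ξ⟫ ∧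
          p = (1 / (-Real.sqrt (C ^ 2 + c ^ 2 - 1) + C * ⟪x, ξ⟫)) • x} =
      {p : EuclideanSpace ℝ (Fin (n + 1)) |
        ‖p‖ - ‖p - (2 * C / (1 - c ^ 2)) • ξ‖ =
          2 * Real.sqrt (C ^ 2 + c ^ 2 - 1) / (1 - c ^ 2)} := by
  have hSC : Real.sqrt (C ^ 2 + c ^ 2 - 1) ^ 2 + (1 - c ^ 2) = C ^ 2 := by
    rw [Real.sq_sqrt (by linarith)]
    ring
  refine ⟨Real.sqrt_pos.mpr (by linarith), ?_⟩
  rw [radial_graph_eq_setOf_inner_eq,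
    hyperboloid_sheet_eq_setOf_inner_eq hξ (by linarith) hSC]

theorem hyperboloid_sheet_minus (n : ℕ) (hn : 2 ≤ n)
    (ξ : EuclideanSpace ℝ (Fin (n + 1))) (hξ : ‖ξ‖ = 1)
    (c C : ℝ) (hc : c ^ 2 < 1) (hC : 1 - c ^ 2 < C ^ 2) :
    0 < Real.sqrt (C ^ 2 + c ^ 2 - 1) ∧
    {p : EuclideanSpace ℝ (Fin (n + 1)) |
        ∃ x ∈ Metric.sphere (0 : EuclideanSpace ℝ (Fin (n + 1))) 1,
          0 < -Real.sqrt (C ^ 2 + c ^ 2 - 1) + C * ⟪x, ξ⟫ ∧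
          p = (1 / (-Real.sqrt (C ^ 2 + c ^ 2 - 1) + C * ⟪x, ξ⟫)) • x} =
      {p : EuclideanSpace ℝ (Fin (n + 1)) |
        ‖p‖ - ‖p - (2 * C / (1 - c ^ 2)) • ξ‖ =
          2 * Real.sqrt (C ^ 2 + c ^ 2 - 1) / (1 - c ^ 2)} :=
  hyperboloid_sheet_minus_general n ξ hξ c C hc hC
end
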